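/- arXiv:math/0101195 — 2 statements merged into one kernel-verified Lean document; each statement's English description precedes it below -/
import Mathlib

section
/- Let X ⊂ ℝⁿ be a bounded measurable set with |X| = m > 0, and suppose X ⊂ B(0,R). Suppose that for every cube Q of side length ρ one has |X ∩ Q| ≤ 10⁻ⁿ·m. Then there exist two cubes Q₁, Q₂ of side length ρ with dist(Q₁, Q₂) ≥ ρ such that |X ∩ Q₁| > 0 and |X ∩ Q₂| > 0, and moreover one can choose Q₁, Q₂ among the cubes of a grid partition of B(0,R) maximizing |X ∩ Q| so that |X ∩ Qᵢ| ≥ m/(CN) where N is the number of grid cubes of side ρ needed to cover B(0,R) and C is an absolute constant. -/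
open MeasureTheory Metric

/-- An axis-parallel cube in `ℝⁿ` with corner `a` and side length `ρ`. -/
def cube {n : ℕ} (a : EuclideanSpace ℝ (Fin n)) (ρ : ℝ) : Set (EuclideanSpace ℝ (Fin n)) :=
  {y | ∀ i, a i ≤ y i ∧ y i ≤ a i + ρ}

lemma coord_le_dist {n : ℕ} (x y : EuclideanSpace ℝ (Fin n)) (i : Fin n) :
    |x i - y i| ≤ dist x y := by
  rw [EuclideanSpace.dist_eq, ← Real.sqrt_sq_eq_abs]
  apply Real.sqrt_le_sqrt
  have h := Finset.single_le_sum (f := fun j => dist (x j) (y j) ^ 2)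
    (fun j _ => sq_nonneg _) (Finset.mem_univ i)
  simpa [Real.dist_eq, sq_abs] using h

lemma cube_cover {n : ℕ} (b : EuclideanSpace ℝ (Fin n)) (ρ : ℝ) (hρ : 0 < ρ)
    {z : EuclideanSpace ℝ (Fin n)} (hz : z ∈ cube b (5 * ρ)) :
    ∃ k : Fin n → Fin 5, z ∈ cube (WithLp.toLp 2 (fun i => b i + (k i : ℝ) * ρ)) ρ := by
  have key : ∀ i, ∃ j : Fin 5, b i + (j : ℝ) * ρ ≤ z i ∧ z i ≤ b i + (j : ℝ) * ρ + ρ := by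
    intro i
    obtain ⟨h1, h2⟩ := hz i
    set t := (z i - b i) / ρ with ht
    have ht0 : 0 ≤ t := div_nonneg (by linarith) hρ.le
    have ht5 : t ≤ 5 := by rw [ht, div_le_iff₀ hρ]; linarith
    have htρ : t * ρ = z i - b i := div_mul_cancel₀ _ hρ.ne'
    by_cases hc : Nat.floor t ≤ 4
    · refine ⟨⟨Nat.floor t, by omega⟩, ?_, ?_⟩
      · have h3 : (Nat.floor t : ℝ) ≤ t := Nat.floor_le ht0
        have : (Nat.floor t : ℝ) * ρ ≤ t * ρ := by nlinarith
        simp only [Fin.val_mk]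
        linarith
      · have h4 : t ≤ (Nat.floor t : ℝ) + 1 := (Nat.lt_floor_add_one t).le
        have : t * ρ ≤ ((Nat.floor t : ℝ) + 1) * ρ := by nlinarith
        simp only [Fin.val_mk]
        linarith
    · refine ⟨⟨4, by omega⟩, ?_, ?_⟩
      · have h5 : (5 : ℝ) ≤ t := by
          have : (5 : ℕ) ≤ Nat.floor t := by omega
          calc (5 : ℝ) = ((5 : ℕ) : ℝ) := by norm_num
            _ ≤ (Nat.floor t : ℝ) := by exact_mod_cast this
            _ ≤ t := Nat.floor_le ht0
        have : (4 : ℝ) * ρ ≤ t * ρ := by nlinarith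
        simp only [Fin.val_mk]
        push_cast
        linarith
      · have : t * ρ ≤ 5 * ρ := by nlinarith
        simp only [Fin.val_mk]
        push_cast
        linarith
  choose k hk using key
  exact ⟨k, fun i => hk i⟩

lemma cover_sum {n : ℕ} (Y : Set (EuclideanSpace ℝ (Fin n)))
    (F : Finset (EuclideanSpace ℝ (Fin n))) (ρ : ℝ)
    (h : Y ⊆ ⋃ a ∈ F, cube a ρ) :
    volume Y ≤ ∑ a ∈ F, volume (Y ∩ cube a ρ) := by
  calc volume Y ≤ volume (⋃ a ∈ F, Y ∩ cube a ρ) := by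
        apply measure_mono
        intro x hx
        obtain ⟨a, haF, hxa⟩ := Set.mem_iUnion₂.mp (h hx)
        exact Set.mem_iUnion₂.mpr ⟨a, haF, hx, hxa⟩
    _ ≤ _ := measure_biUnion_finset_le _ _

lemma exists_ge_of_cover {n N : ℕ} (Y : Set (EuclideanSpace ℝ (Fin n)))
    (F : Finset (EuclideanSpace ℝ (Fin n))) (ρ c : ℝ)
    (hcard : F.card ≤ N)
    (h : Y ⊆ ⋃ a ∈ F, cube a ρ)
    (hY : ENNReal.ofReal (N * c) < volume Y) :
    ∃ a ∈ F, ENNReal.ofReal c ≤ volume (Y ∩ cube a ρ) := by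
  by_contra hcon
  push_neg at hcon
  have hbound : volume Y ≤ ENNReal.ofReal (N * c) := by
    calc volume Y ≤ ∑ a ∈ F, volume (Y ∩ cube a ρ) := cover_sum Y F ρ h
      _ ≤ ∑ _a ∈ F, ENNReal.ofReal c :=
          Finset.sum_le_sum (fun a ha => (hcon a ha).le)
      _ = F.card • ENNReal.ofReal c := by rw [Finset.sum_const]
      _ ≤ N • ENNReal.ofReal c := by
          rw [nsmul_eq_mul, nsmul_eq_mul]
          exact mul_le_mul_left (by exact_mod_cast Nat.cast_le.mpr hcard) _
      _ = ENNReal.ofReal (N * c) := by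
          rw [nsmul_eq_mul, ← ENNReal.ofReal_natCast N,
            ← ENNReal.ofReal_mul (Nat.cast_nonneg N)]
  exact absurd hY (not_lt.mpr hbound)

/-- Separation lemma: if a bounded set `X` of measure `m > 0` puts at most `10⁻ⁿ m` of its
mass in any cube of side `ρ`, then one can find two cubes of side `ρ`, separated by at
least `ρ`, each carrying mass at least `m/(C N)`, where `N` bounds the number of cubes of
side `ρ` needed to cover `B(0,R)` and `C` is an absolute constant. -/
theorem separation_lemma :
    ∃ C : ℝ, 0 < C ∧
    ∀ (n : ℕ) (X : Set (EuclideanSpace ℝ (Fin n))) (m R ρ : ℝ) (N : ℕ),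
      0 < n → MeasurableSet X → Bornology.IsBounded X →
      volume X = ENNReal.ofReal m → 0 < m → 0 < R → 0 < ρ →
      X ⊆ ball 0 R →
      (∀ a : EuclideanSpace ℝ (Fin n),
        volume (X ∩ cube a ρ) ≤ ENNReal.ofReal ((1/10) ^ n * m)) →
      (∃ F : Finset (EuclideanSpace ℝ (Fin n)),
        F.card ≤ N ∧ ball (0 : EuclideanSpace ℝ (Fin n)) R ⊆ ⋃ a ∈ F, cube a ρ) →
      ∃ a₁ a₂ : EuclideanSpace ℝ (Fin n),
        (∀ x ∈ cube a₁ ρ, ∀ y ∈ cube a₂ ρ, ρ ≤ dist x y) ∧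
        ENNReal.ofReal (m / (C * N)) ≤ volume (X ∩ cube a₁ ρ) ∧
        ENNReal.ofReal (m / (C * N)) ≤ volume (X ∩ cube a₂ ρ) := by
  refine ⟨4, by norm_num, ?_⟩
  intro n X m R ρ N hn hXmeas hXbdd hXvol hm hR hρ hXball hsmall ⟨F, hFcard, hFcover⟩
  have hXcover : X ⊆ ⋃ a ∈ F, cube a ρ := hXball.trans hFcover
  have hXne : X.Nonempty := by
    rw [Set.nonempty_iff_ne_empty]
    intro h
    rw [h, measure_empty] at hXvol
    have := ENNReal.ofReal_eq_zero.mp hXvol.symm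
    linarith
  have hN : 0 < N := by
    rcases Nat.eq_zero_or_pos N with h0 | h
    · exfalso
      have : F = ∅ := Finset.card_eq_zero.mp (le_antisymm (h0 ▸ hFcard) (Nat.zero_le _))
      rw [this] at hXcover
      simp at hXcover
      exact hXne.ne_empty hXcover
    · exact h
  have hNR : (0 : ℝ) < N := Nat.cast_pos.mpr hN
  have hq : (N : ℝ) * (m / (4 * N)) = m / 4 := by field_simp
  -- choose a₁
  have hX1 : ENNReal.ofReal ((N : ℝ) * (m / (4 * N))) < volume X := by
    rw [hq, hXvol]
    exact ENNReal.ofReal_lt_ofReal_iff hm |>.mpr (by linarith)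
  obtain ⟨a₁, ha₁F, ha₁⟩ := exists_ge_of_cover X F ρ (m / (4 * N)) hFcard hXcover hX1
  -- the big cube T around cube a₁ ρ
  set b : EuclideanSpace ℝ (Fin n) := WithLp.toLp 2 (fun i => a₁ i - 2 * ρ) with hb
  set T : Set (EuclideanSpace ℝ (Fin n)) := cube b (5 * ρ) with hT
  -- mass of X ∩ T is at most m/2
  have hTmass : volume (X ∩ T) ≤ ENNReal.ofReal (m / 2) := by
    have hsub : X ∩ T ⊆ ⋃ k : Fin n → Fin 5, X ∩ cube (WithLp.toLp 2 (fun i => b i + (k i : ℝ) * ρ)) ρ := by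
      rintro z ⟨hzX, hzT⟩
      obtain ⟨k, hk⟩ := cube_cover b ρ hρ hzT
      exact Set.mem_iUnion.mpr ⟨k, hzX, hk⟩
    calc volume (X ∩ T)
        ≤ volume (⋃ k : Fin n → Fin 5, X ∩ cube (WithLp.toLp 2 (fun i => b i + (k i : ℝ) * ρ)) ρ) :=
          measure_mono hsub
      _ ≤ ∑ k : Fin n → Fin 5, volume (X ∩ cube (WithLp.toLp 2 (fun i => b i + (k i : ℝ) * ρ)) ρ) := by
          have h := measure_iUnion_le
            (μ := volume) (fun k : Fin n → Fin 5 => X ∩ cube (WithLp.toLp 2 (fun i => b i + (k i : ℝ) * ρ)) ρ)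
          rwa [tsum_fintype] at h
      _ ≤ ∑ _k : Fin n → Fin 5, ENNReal.ofReal ((1/10) ^ n * m) :=
          Finset.sum_le_sum (fun k _ => hsmall _)
      _ = (5 ^ n : ℕ) • ENNReal.ofReal ((1/10) ^ n * m) := by
          rw [Finset.sum_const, Finset.card_univ]
          congr 1
          simp [Fintype.card_fun]
      _ = ENNReal.ofReal ((5 ^ n : ℕ) * ((1/10) ^ n * m)) := by
          rw [nsmul_eq_mul, ← ENNReal.ofReal_natCast, ← ENNReal.ofReal_mul (Nat.cast_nonneg _)]
      _ ≤ ENNReal.ofReal (m / 2) := by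
          apply ENNReal.ofReal_le_ofReal
          push_cast
          have h12 : ((5 : ℝ) ^ n) * ((1/10) ^ n * m) = (1/2 : ℝ) ^ n * m := by
            rw [← mul_assoc, ← mul_pow]; norm_num
          rw [h12]
          have hle : ((1:ℝ)/2) ^ n ≤ (1/2 : ℝ) ^ 1 :=
            pow_le_pow_of_le_one (by norm_num) (by norm_num) hn
          nlinarith [hle]
  -- mass outside T is more than m/4
  have hout : ENNReal.ofReal ((N : ℝ) * (m / (4 * N))) < volume (X \ T) := by
    rw [hq]
    by_contra hcon
    push_neg at hcon
    have h1 : volume X ≤ volume (X ∩ T) + volume (X \ T) :=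
      measure_le_inter_add_diff _ _ _
    have h2 : volume X ≤ ENNReal.ofReal (m / 2) + ENNReal.ofReal (m / 4) :=
      h1.trans (add_le_add hTmass hcon)
    rw [hXvol, ← ENNReal.ofReal_add (by linarith) (by linarith)] at h2
    have := (ENNReal.ofReal_le_ofReal_iff (by linarith)).mp h2
    linarith
  -- choose a₂
  have hXTcover : X \ T ⊆ ⋃ a ∈ F, cube a ρ := (Set.diff_subset).trans hXcover
  obtain ⟨a₂, ha₂F, ha₂⟩ := exists_ge_of_cover (X \ T) F ρ (m / (4 * N)) hFcard hXTcover hout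
  -- get a witness point
  have hpos : volume ((X \ T) ∩ cube a₂ ρ) ≠ 0 := by
    intro h0
    rw [h0] at ha₂
    have : (m / (4 * N)) ≤ 0 := by
      by_contra hc
      push_neg at hc
      exact absurd (nonpos_iff_eq_zero.mp ha₂) (ENNReal.ofReal_pos.mpr hc).ne'
    have : 0 < m / (4 * N) := by positivity
    linarith
  obtain ⟨z, ⟨⟨hzX, hzT⟩, hz₂⟩⟩ := nonempty_of_measure_ne_zero hpos
  refine ⟨a₁, a₂, ?_, ?_, ?_⟩
  · -- separation
    intro x hx y hy
    have hzT' : ¬ ∀ i, b i ≤ z i ∧ z i ≤ b i + 5 * ρ := hzT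
    push_neg at hzT'
    obtain ⟨i, hi⟩ := hzT'
    have hd := coord_le_dist x y i
    have hxi := hx i
    have hyi := hy i
    have hzi := hz₂ i
    have hbi : b i = a₁ i - 2 * ρ := rfl
    rcases lt_or_ge (z i) (b i) with hlt | hge
    · -- z i < a₁ i - 2ρ : x i - y i > ρ
      have : ρ ≤ x i - y i := by linarith [hbi ▸ hlt]
      calc ρ ≤ x i - y i := this
        _ ≤ |x i - y i| := le_abs_self _
        _ ≤ dist x y := hd
    · have hgt : b i + 5 * ρ < z i := hi hge
      have : ρ ≤ y i - x i := by
        rw [hbi] at hgt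
        linarith
      calc ρ ≤ y i - x i := this
        _ ≤ |x i - y i| := by rw [abs_sub_comm]; exact le_abs_self _
        _ ≤ dist x y := hd
  · exact ha₁
  · exact ha₂.trans (measure_mono (Set.inter_subset_inter_left _ Set.diff_subset))
end

section
/- Let Ω be a δ-separated set of directions in S¹ and for each ω ∈ Ω let R_ω be a δ × 1 rectangle oriented in direction ω, all contained in a fixed ball of radius O(1). Then ‖Σ_{ω ∈ Ω} χ_{R_ω}‖_{L²} ≤ C·(log(1/δ))^{1/2}, equivalently Σ_{ω,ω' ∈ Ω} |R_ω ∩ R_{ω'}| ≤ C·log(1/δ). -/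
open MeasureTheory Real

/-- The `δ × 1` rectangle centered at `c` with long side in the unit direction `ω`. -/
def rect (c ω : ℝ × ℝ) (δ : ℝ) : Set (ℝ × ℝ) :=
  {x | |(x.1 - c.1) * ω.1 + (x.2 - c.2) * ω.2| ≤ 1/2 ∧
       |-(x.1 - c.1) * ω.2 + (x.2 - c.2) * ω.1| ≤ δ/2}

noncomputable def T2 (a b c d : ℝ) : (ℝ × ℝ) →ₗ[ℝ] (ℝ × ℝ) where
  toFun x := (a * x.1 + b * x.2, c * x.1 + d * x.2)
  map_add' x y := by simp [Prod.ext_iff]; constructor <;> ring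
  map_smul' r x := by simp [Prod.ext_iff]; constructor <;> ring

@[simp] lemma T2_apply (a b c d : ℝ) (x : ℝ × ℝ) :
    T2 a b c d x = (a * x.1 + b * x.2, c * x.1 + d * x.2) := rfl

lemma det_T2 (a b c d : ℝ) : LinearMap.det (T2 a b c d) = a * d - b * c := by
  have h : T2 a b c d =
      Matrix.toLin (Module.Basis.finTwoProd ℝ) (Module.Basis.finTwoProd ℝ) !![a, b; c, d] := by
    apply (Module.Basis.finTwoProd ℝ).ext
    intro i
    rw [Matrix.toLin_self]
    fin_cases i <;>
      simp [Fin.sum_univ_two, Module.Basis.finTwoProd_zero, Module.Basis.finTwoProd_one, Prod.ext_iff]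
  rw [h, LinearMap.det_toLin, Matrix.det_fin_two_of]

lemma vol_preimage_T2 (a b c d : ℝ) (h : a * d - b * c ≠ 0) (p q r s : ℝ) :
    volume (T2 a b c d ⁻¹' (Set.Icc p q ×ˢ Set.Icc r s)) =
      ENNReal.ofReal |(a * d - b * c)⁻¹| * (ENNReal.ofReal (q - p) * ENNReal.ofReal (s - r)) := by
  rw [Measure.addHaar_preimage_linearMap volume (by rw [det_T2]; exact h),
    det_T2, Measure.volume_eq_prod, Measure.prod_prod, Real.volume_Icc, Real.volume_Icc]

lemma rect_eq_preimage (c ω : ℝ × ℝ) (δ : ℝ) :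
    rect c ω δ = T2 ω.1 ω.2 (-ω.2) ω.1 ⁻¹'
      (Set.Icc (ω.1 * c.1 + ω.2 * c.2 - 1/2) (ω.1 * c.1 + ω.2 * c.2 + 1/2) ×ˢ
       Set.Icc (-ω.2 * c.1 + ω.1 * c.2 - δ/2) (-ω.2 * c.1 + ω.1 * c.2 + δ/2)) := by
  ext x
  simp only [rect, Set.mem_setOf_eq, Set.mem_preimage, T2_apply, Set.mem_prod, Set.mem_Icc,
    abs_le]
  constructor
  · rintro ⟨⟨h1, h2⟩, h3, h4⟩
    refine ⟨⟨by nlinarith, by nlinarith⟩, by nlinarith, by nlinarith⟩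
  · rintro ⟨⟨h1, h2⟩, h3, h4⟩
    refine ⟨⟨by nlinarith, by nlinarith⟩, by nlinarith, by nlinarith⟩

lemma vol_rect (θ : ℝ) (c : ℝ × ℝ) (δ : ℝ) :
    volume (rect c (Real.cos θ, Real.sin θ) δ) = ENNReal.ofReal δ := by
  have hdet : Real.cos θ * Real.cos θ - Real.sin θ * -Real.sin θ = 1 := by
    have := Real.sin_sq_add_cos_sq θ; nlinarith
  rw [rect_eq_preimage, vol_preimage_T2 _ _ _ _ (by rw [hdet]; norm_num), hdet]
  norm_num

lemma rect_subset_strip (θ : ℝ) (c : ℝ × ℝ) (δ : ℝ) :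
    rect c (Real.cos θ, Real.sin θ) δ ⊆
      {x : ℝ × ℝ | -Real.sin θ * x.1 + Real.cos θ * x.2 ∈
        Set.Icc (-Real.sin θ * c.1 + Real.cos θ * c.2 - δ/2)
                (-Real.sin θ * c.1 + Real.cos θ * c.2 + δ/2)} := by
  rintro x ⟨_, h2⟩
  simp only [Set.mem_setOf_eq, Set.mem_Icc]
  rw [abs_le] at h2
  constructor <;> nlinarith [h2.1, h2.2]

lemma vol_inter_le_sin (θ θ' : ℝ) (c c' : ℝ × ℝ) (δ : ℝ) (hδ : 0 ≤ δ)
    (h : Real.sin (θ' - θ) ≠ 0) :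
    (volume (rect c (Real.cos θ, Real.sin θ) δ ∩
      rect c' (Real.cos θ', Real.sin θ') δ)).toReal ≤ δ^2 / |Real.sin (θ' - θ)| := by
  set b : ℝ := -Real.sin θ * c.1 + Real.cos θ * c.2
  set b' : ℝ := -Real.sin θ' * c'.1 + Real.cos θ' * c'.2
  have hsub : rect c (Real.cos θ, Real.sin θ) δ ∩ rect c' (Real.cos θ', Real.sin θ') δ ⊆
      T2 (-Real.sin θ) (Real.cos θ) (-Real.sin θ') (Real.cos θ') ⁻¹'
        (Set.Icc (b - δ/2) (b + δ/2) ×ˢ Set.Icc (b' - δ/2) (b' + δ/2)) := by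
    rintro x ⟨hx, hx'⟩
    have h1 := rect_subset_strip θ c δ hx
    have h2 := rect_subset_strip θ' c' δ hx'
    simp only [Set.mem_setOf_eq] at h1 h2
    exact ⟨h1, h2⟩
  have hdet : -Real.sin θ * Real.cos θ' - Real.cos θ * -Real.sin θ' = Real.sin (θ' - θ) := by
    rw [Real.sin_sub]; ring
  have hv := measure_mono (μ := (volume : Measure (ℝ × ℝ))) hsub
  rw [vol_preimage_T2 _ _ _ _ (by rw [hdet]; exact h)] at hv
  rw [hdet] at hv
  have heq : (ENNReal.ofReal |(Real.sin (θ' - θ))⁻¹| *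
      (ENNReal.ofReal (b + δ/2 - (b - δ/2)) * ENNReal.ofReal (b' + δ/2 - (b' - δ/2)))).toReal
      = δ^2 / |Real.sin (θ' - θ)| := by
    rw [ENNReal.toReal_mul, ENNReal.toReal_mul, ENNReal.toReal_ofReal (abs_nonneg _),
      ENNReal.toReal_ofReal (by linarith), ENNReal.toReal_ofReal (by linarith)]
    rw [abs_inv]
    ring_nf
  calc (volume _).toReal ≤ _ := ENNReal.toReal_mono (by finiteness) hv
    _ = δ^2 / |Real.sin (θ' - θ)| := heq

lemma vol_inter_le_delta (θ θ' : ℝ) (c c' : ℝ × ℝ) (δ : ℝ) (hδ : 0 ≤ δ) :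
    (volume (rect c (Real.cos θ, Real.sin θ) δ ∩
      rect c' (Real.cos θ', Real.sin θ') δ)).toReal ≤ δ := by
  have h := measure_mono (μ := (volume : Measure (ℝ × ℝ))) (Set.inter_subset_left
    (s := rect c (Real.cos θ, Real.sin θ) δ) (t := rect c' (Real.cos θ', Real.sin θ') δ))
  rw [vol_rect] at h
  calc (volume _).toReal ≤ (ENNReal.ofReal δ).toReal := ENNReal.toReal_mono (by finiteness) h
    _ = δ := ENNReal.toReal_ofReal hδ

lemma sum_inv_le (K : ℕ) : ∑ k ∈ Finset.Icc 1 K, ((k : ℝ))⁻¹ ≤ 1 + Real.log K := by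
  have h := harmonic_le_one_add_log K
  rw [harmonic_eq_sum_Icc] at h
  push_cast at h
  exact h

lemma floor_inj_on (δ : ℝ) (hδ : 0 < δ) {x y : ℝ} (hx : 0 ≤ x) (hy : 0 ≤ y)
    (hsep : δ ≤ |x - y|) : ⌊x / δ⌋₊ ≠ ⌊y / δ⌋₊ := by
  intro h
  have hx1 : (⌊x / δ⌋₊ : ℝ) ≤ x / δ := Nat.floor_le (by positivity)
  have hx2 : x / δ < ⌊x / δ⌋₊ + 1 := Nat.lt_floor_add_one _
  have hy1 : (⌊y / δ⌋₊ : ℝ) ≤ y / δ := Nat.floor_le (by positivity)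
  have hy2 : y / δ < ⌊y / δ⌋₊ + 1 := Nat.lt_floor_add_one _
  rw [h] at hx1 hx2
  have h3 : (x - y) / δ < 1 := by rw [sub_div]; linarith
  have h4 : (y - x) / δ < 1 := by rw [sub_div]; linarith
  have : |x - y| < δ := by
    rw [abs_sub_lt_iff]
    exact ⟨(div_lt_one hδ).mp h3, (div_lt_one hδ).mp h4⟩
  linarith [hsep]

lemma bucket_sum (δ : ℝ) (hδ0 : 0 < δ) (B : Finset ℝ) (hB : ∀ x ∈ B, δ ≤ x ∧ x < π)
    (hsep : ∀ x ∈ B, ∀ y ∈ B, x ≠ y → δ ≤ |x - y|) :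
    ∑ x ∈ B, min δ (2 * δ ^ 2 / x) ≤ 2 * δ * (1 + Real.log ⌊π / δ⌋₊) := by
  set K := ⌊π / δ⌋₊
  have step1 : ∑ x ∈ B, min δ (2 * δ ^ 2 / x) ≤ ∑ x ∈ B, 2 * δ / ⌊x / δ⌋₊ := by
    apply Finset.sum_le_sum
    intro x hx
    obtain ⟨h1, h2⟩ := hB x hx
    have hk1 : 1 ≤ ⌊x / δ⌋₊ := Nat.one_le_floor_iff _ |>.mpr ((one_le_div hδ0).mpr h1)
    have hk1' : (0:ℝ) < ⌊x / δ⌋₊ := by exact_mod_cast hk1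
    have hkle : (⌊x / δ⌋₊ : ℝ) * δ ≤ x := by
      have := Nat.floor_le (a := x / δ) (div_nonneg (by linarith) hδ0.le)
      calc (⌊x / δ⌋₊ : ℝ) * δ ≤ (x / δ) * δ := by nlinarith
        _ = x := by field_simp
    refine le_trans (min_le_right _ _) ?_
    rw [div_le_div_iff₀ (by linarith) hk1']
    nlinarith
  have step2 : ∑ x ∈ B, 2 * δ / (⌊x / δ⌋₊ : ℝ) = ∑ k ∈ B.image (fun x => ⌊x / δ⌋₊), 2 * δ / k := by
    rw [Finset.sum_image]
    intro x hx y hy h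
    by_contra hne
    exact floor_inj_on δ hδ0 (by linarith [(hB x hx).1]) (by linarith [(hB y hy).1])
      (hsep x hx y hy hne) h
  have step3 : B.image (fun x => ⌊x / δ⌋₊) ⊆ Finset.Icc 1 K := by
    intro k hk
    simp only [Finset.mem_image] at hk
    obtain ⟨x, hx, rfl⟩ := hk
    obtain ⟨h1, h2⟩ := hB x hx
    rw [Finset.mem_Icc]
    exact ⟨Nat.one_le_floor_iff _ |>.mpr ((one_le_div hδ0).mpr h1),
      Nat.floor_mono (by gcongr)⟩
  calc ∑ x ∈ B, min δ (2 * δ ^ 2 / x) ≤ ∑ x ∈ B, 2 * δ / ⌊x / δ⌋₊ := step1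
    _ = ∑ k ∈ B.image (fun x => ⌊x / δ⌋₊), 2 * δ / k := step2
    _ ≤ ∑ k ∈ Finset.Icc 1 K, 2 * δ / k := by
        apply Finset.sum_le_sum_of_subset_of_nonneg step3
        intro k _ _; positivity
    _ = 2 * δ * ∑ k ∈ Finset.Icc 1 K, ((k:ℝ))⁻¹ := by
        rw [Finset.mul_sum]; apply Finset.sum_congr rfl; intro k _; rw [div_eq_mul_inv]
    _ ≤ 2 * δ * (1 + Real.log K) := by
        apply mul_le_mul_of_nonneg_left (sum_inv_le K) (by linarith)

lemma bucket_sum' (δ : ℝ) (hδ0 : 0 < δ) (B : Finset ℝ) (hB : ∀ x ∈ B, δ ≤ x ∧ x < π)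
    (hsep : ∀ x ∈ B, ∀ y ∈ B, x ≠ y → δ ≤ |x - y|) :
    ∑ x ∈ B, min δ (2 * δ ^ 2 / (π - x)) ≤ δ + 2 * δ * (1 + Real.log ⌊π / δ⌋₊) := by
  set K := ⌊π / δ⌋₊ with hK
  set h : ℕ → ℝ := fun k => if k = 0 then δ else 2 * δ / k with hh
  have hnonneg : ∀ k, 0 ≤ h k := by
    intro k; rw [hh]; dsimp only; split <;> positivity
  have step1 : ∑ x ∈ B, min δ (2 * δ ^ 2 / (π - x)) ≤ ∑ x ∈ B, h ⌊(π - x) / δ⌋₊ := by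
    apply Finset.sum_le_sum
    intro x hx
    obtain ⟨h1, h2⟩ := hB x hx
    have hpx : 0 < π - x := by linarith
    by_cases h0 : ⌊(π - x) / δ⌋₊ = 0
    · rw [hh]; simp only [h0, if_pos rfl]; exact min_le_left _ _
    · rw [hh]; simp only [if_neg h0]
      have hk1' : (0:ℝ) < ⌊(π - x) / δ⌋₊ := by
        exact_mod_cast Nat.pos_of_ne_zero h0
      have hkle : (⌊(π - x) / δ⌋₊ : ℝ) * δ ≤ π - x := by
        have := Nat.floor_le (a := (π - x) / δ) (div_nonneg hpx.le hδ0.le)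
        calc (⌊(π - x) / δ⌋₊ : ℝ) * δ ≤ ((π - x) / δ) * δ := by nlinarith
          _ = π - x := by field_simp
      refine le_trans (min_le_right _ _) ?_
      rw [div_le_div_iff₀ hpx hk1']
      nlinarith
  have step2 : ∑ x ∈ B, h ⌊(π - x) / δ⌋₊ = ∑ k ∈ B.image (fun x => ⌊(π - x) / δ⌋₊), h k := by
    rw [Finset.sum_image]
    intro x hx y hy heq
    by_contra hne
    have hxx : x ≠ y := fun hc => hne (by rw [hc])
    refine floor_inj_on δ hδ0 (x := π - x) (y := π - y)
      (by linarith [(hB x hx).2]) (by linarith [(hB y hy).2]) ?_ heq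
    have habs : |π - x - (π - y)| = |y - x| := by
      rw [show π - x - (π - y) = -(x - y) by ring, abs_neg, abs_sub_comm]
    rw [habs, abs_sub_comm]
    exact hsep x hx y hy hxx
  have step3 : B.image (fun x => ⌊(π - x) / δ⌋₊) ⊆ Finset.Icc 0 K := by
    intro k hk
    simp only [Finset.mem_image] at hk
    obtain ⟨x, hx, rfl⟩ := hk
    obtain ⟨h1, h2⟩ := hB x hx
    rw [Finset.mem_Icc]
    exact ⟨Nat.zero_le _, Nat.floor_mono (by gcongr; linarith)⟩
  calc ∑ x ∈ B, min δ (2 * δ ^ 2 / (π - x)) ≤ ∑ x ∈ B, h ⌊(π - x) / δ⌋₊ := step1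
    _ = ∑ k ∈ B.image (fun x => ⌊(π - x) / δ⌋₊), h k := step2
    _ ≤ ∑ k ∈ Finset.Icc 0 K, h k := Finset.sum_le_sum_of_subset_of_nonneg step3
        (fun k _ _ => hnonneg k)
    _ ≤ δ + 2 * δ * (1 + Real.log K) := by
        rw [show Finset.Icc 0 K = insert 0 (Finset.Icc 1 K) by
          ext m; simp [Finset.mem_Icc, Nat.lt_one_iff, Nat.one_le_iff_ne_zero]; omega]
        rw [Finset.sum_insert (by simp)]
        rw [hh]; simp only [if_pos rfl]
        gcongr ?_ + ?_
        · exact le_refl δ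
        · calc ∑ k ∈ Finset.Icc 1 K, (if k = 0 then δ else 2 * δ / k)
              = ∑ k ∈ Finset.Icc 1 K, 2 * δ / k := by
                apply Finset.sum_congr rfl; intro k hk
                rw [if_neg]; rw [Finset.mem_Icc] at hk; omega
            _ = 2 * δ * ∑ k ∈ Finset.Icc 1 K, ((k:ℝ))⁻¹ := by
                rw [Finset.mul_sum]; apply Finset.sum_congr rfl; intro k _; rw [div_eq_mul_inv]
            _ ≤ 2 * δ * (1 + Real.log K) := by
                apply mul_le_mul_of_nonneg_left (sum_inv_le K) (by linarith)

lemma min_add_le (d x y : ℝ) (hd : 0 ≤ d) (hx : 0 ≤ x) (hy : 0 ≤ y) :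
    min d (x + y) ≤ min d x + min d y := by
  rcases le_total d x with h | h
  · calc min d (x + y) ≤ d := min_le_left _ _
      _ = min d x + 0 := by rw [min_eq_left h, add_zero]
      _ ≤ min d x + min d y := by gcongr; exact le_min hd hy
  · rcases le_total d y with h' | h'
    · calc min d (x + y) ≤ d := min_le_left _ _
        _ = 0 + min d y := by rw [min_eq_left h', zero_add]
        _ ≤ min d x + min d y := by gcongr; exact le_min hd hx
    · calc min d (x + y) ≤ x + y := min_le_right _ _
        _ = min d x + min d y := by rw [min_eq_right h, min_eq_right h']

lemma sin_lower (Δ : ℝ) (h1 : 0 < Δ) (h2 : Δ < π) :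
    2 / π * min Δ (π - Δ) ≤ Real.sin Δ := by
  rcases le_total Δ (π / 2) with h | h
  · refine le_trans (mul_le_mul_of_nonneg_left (min_le_left _ _) (by positivity)) ?_
    exact Real.mul_le_sin h1.le h
  · have h3 : Real.sin Δ = Real.sin (π - Δ) := (Real.sin_pi_sub Δ).symm
    rw [h3]
    refine le_trans (mul_le_mul_of_nonneg_left (min_le_right _ _) (by positivity)) ?_
    exact Real.mul_le_sin (by linarith) (by linarith)

lemma pair_bound (θ θ' : ℝ) (c c' : ℝ × ℝ) (δ : ℝ) (hδ : 0 < δ)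
    (hθ : θ ∈ Set.Ico (0:ℝ) π) (hθ' : θ' ∈ Set.Ico (0:ℝ) π) (hne : θ ≠ θ') :
    (volume (rect c (Real.cos θ, Real.sin θ) δ ∩
      rect c' (Real.cos θ', Real.sin θ') δ)).toReal ≤
      min δ (2 * δ ^ 2 / |θ - θ'|) + min δ (2 * δ ^ 2 / (π - |θ - θ'|)) := by
  obtain ⟨hθ0, hθπ⟩ := hθ
  obtain ⟨hθ'0, hθ'π⟩ := hθ'
  set Δ := |θ - θ'| with hΔdef
  have hΔ0 : 0 < Δ := abs_pos.mpr (sub_ne_zero.mpr hne)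
  have hΔπ : Δ < π := by
    rw [hΔdef, abs_sub_lt_iff]; constructor <;> linarith
  have hsinΔ : 0 < Real.sin Δ := Real.sin_pos_of_pos_of_lt_pi hΔ0 hΔπ
  have habs : |Real.sin (θ' - θ)| = Real.sin Δ := by
    rcases le_total θ θ' with h | h
    · have : Δ = θ' - θ := by rw [hΔdef, abs_sub_comm, abs_of_nonneg (by linarith)]
      rw [← this, abs_of_pos hsinΔ]
    · have hd : Δ = θ - θ' := by rw [hΔdef, abs_of_nonneg (by linarith)]
      have : Real.sin (θ' - θ) = -Real.sin Δ := by
        rw [hd, show θ' - θ = -(θ - θ') by ring, Real.sin_neg]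
      rw [this, abs_neg, abs_of_pos hsinΔ]
  have hsne : Real.sin (θ' - θ) ≠ 0 := by
    intro h; rw [h, abs_zero] at habs; linarith
  have h1 : (volume (rect c (Real.cos θ, Real.sin θ) δ ∩
      rect c' (Real.cos θ', Real.sin θ') δ)).toReal ≤ δ^2 / Real.sin Δ := by
    have := vol_inter_le_sin θ θ' c c' δ hδ.le hsne
    rwa [habs] at this
  have h2 := vol_inter_le_delta θ θ' c c' δ hδ.le
  have hmin : (volume (rect c (Real.cos θ, Real.sin θ) δ ∩
      rect c' (Real.cos θ', Real.sin θ') δ)).toReal ≤ min δ (δ^2 / Real.sin Δ) :=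
    le_min h2 h1
  set m := min Δ (π - Δ) with hm
  have hm0 : 0 < m := lt_min hΔ0 (by linarith)
  have hsge : 2 / π * m ≤ Real.sin Δ := sin_lower Δ hΔ0 hΔπ
  have hstep : δ^2 / Real.sin Δ ≤ 2 * δ^2 / Δ + 2 * δ^2 / (π - Δ) := by
    have hπ4 := Real.pi_le_four
    have hπ0 := Real.pi_pos
    have h2m : (0:ℝ) < 2 / π * m := mul_pos (by positivity) hm0
    have hA : δ^2 / Real.sin Δ ≤ δ^2 / (2 / π * m) :=
      div_le_div_of_nonneg_left (by positivity) h2m hsge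
    have hB : δ^2 / (2 / π * m) ≤ 2 * δ^2 / m := by
      rw [show δ^2 / (2 / π * m) = π * δ^2 / (2 * m) by
        rw [div_eq_div_iff h2m.ne' (by linarith : (0:ℝ) < 2*m).ne']; field_simp]
      rw [show 2 * δ^2 / m = 4 * δ^2 / (2 * m) by
        rw [div_eq_div_iff hm0.ne' (by linarith : (0:ℝ) < 2*m).ne']; ring]
      gcongr
    have hC : 2 * δ^2 / m ≤ 2 * δ^2 / Δ + 2 * δ^2 / (π - Δ) := by
      rcases min_cases Δ (π - Δ) with ⟨he, _⟩ | ⟨he, _⟩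
      · rw [hm, he]
        have : (0:ℝ) ≤ 2 * δ^2 / (π - Δ) := div_nonneg (by positivity) (by linarith)
        linarith
      · rw [hm, he]
        have : (0:ℝ) ≤ 2 * δ^2 / Δ := div_nonneg (by positivity) hΔ0.le
        linarith
    linarith
  calc (volume _).toReal ≤ min δ (δ^2 / Real.sin Δ) := hmin
    _ ≤ min δ (2 * δ^2 / Δ + 2 * δ^2 / (π - Δ)) := by
        apply min_le_min (le_refl _)
        exact hstep
    _ ≤ min δ (2 * δ^2 / Δ) + min δ (2 * δ^2 / (π - Δ)) :=
        min_add_le δ _ _ hδ.le (div_nonneg (by positivity) hΔ0.le)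
          (div_nonneg (by positivity) (by linarith))

lemma card_sep (δ : ℝ) (hδ : 0 < δ) (Ω : Finset ℝ)
    (hr : ∀ θ ∈ Ω, θ ∈ Set.Ico (0:ℝ) π)
    (hsep : ∀ θ ∈ Ω, ∀ θ' ∈ Ω, θ ≠ θ' → δ ≤ |θ - θ'|) :
    Ω.card ≤ ⌊π / δ⌋₊ + 1 := by
  have hinj : ∀ x ∈ Ω, ∀ y ∈ Ω, ⌊x / δ⌋₊ = ⌊y / δ⌋₊ → x = y := by
    intro x hx y hy h
    by_contra hne
    exact floor_inj_on δ hδ (hr x hx).1 (hr y hy).1 (hsep x hx y hy hne) h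
  have hsub : Ω.image (fun θ => ⌊θ / δ⌋₊) ⊆ Finset.range (⌊π / δ⌋₊ + 1) := by
    intro k hk
    simp only [Finset.mem_image] at hk
    obtain ⟨x, hx, rfl⟩ := hk
    rw [Finset.mem_range, Nat.lt_succ_iff]
    exact Nat.floor_mono (by gcongr; exact (hr x hx).2.le)
  calc Ω.card = (Ω.image (fun θ => ⌊θ / δ⌋₊)).card := (Finset.card_image_of_injOn hinj).symm
    _ ≤ (Finset.range (⌊π / δ⌋₊ + 1)).card := Finset.card_le_card hsub
    _ = ⌊π / δ⌋₊ + 1 := Finset.card_range _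

lemma side_bound (δ θ : ℝ) (hδ : 0 < δ) (A : Finset ℝ)
    (habs : ∀ θ' ∈ A, δ ≤ |θ - θ'| ∧ |θ - θ'| < π)
    (hsepA : ∀ x ∈ A, ∀ y ∈ A, x ≠ y → δ ≤ |x - y|)
    (hside : (∀ θ' ∈ A, θ < θ') ∨ (∀ θ' ∈ A, θ' < θ)) :
    ∑ θ' ∈ A, (min δ (2 * δ^2 / |θ - θ'|) + min δ (2 * δ^2 / (π - |θ - θ'|)))
      ≤ δ + 4 * δ * (1 + Real.log ⌊π / δ⌋₊) := by
  have key : ∀ x ∈ A, ∀ y ∈ A, |θ - x| = |θ - y| → x = y := by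
    intro x hx y hy h
    rcases hside with hs | hs
    · have h1 := hs x hx; have h2 := hs y hy
      rw [show |θ - x| = x - θ by rw [abs_of_nonpos (by linarith)]; ring,
        show |θ - y| = y - θ by rw [abs_of_nonpos (by linarith)]; ring] at h
      linarith
    · have h1 := hs x hx; have h2 := hs y hy
      rw [show |θ - x| = θ - x from abs_of_nonneg (by linarith),
        show |θ - y| = θ - y from abs_of_nonneg (by linarith)] at h
      linarith
  set B := A.image (fun θ' => |θ - θ'|) with hBdef
  have hsum : ∑ x ∈ B, (min δ (2*δ^2/x) + min δ (2*δ^2/(π - x)))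
      = ∑ θ' ∈ A, (min δ (2*δ^2/|θ - θ'|) + min δ (2*δ^2/(π - |θ - θ'|))) :=
    Finset.sum_image key
  have hBmem : ∀ x ∈ B, δ ≤ x ∧ x < π := by
    intro x hx
    simp only [hBdef, Finset.mem_image] at hx
    obtain ⟨a, ha, rfl⟩ := hx
    exact habs a ha
  have hBsep : ∀ x ∈ B, ∀ y ∈ B, x ≠ y → δ ≤ |x - y| := by
    intro x hx y hy hne
    simp only [hBdef, Finset.mem_image] at hx hy
    obtain ⟨a, ha, rfl⟩ := hx
    obtain ⟨b, hb, rfl⟩ := hy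
    have hab : a ≠ b := fun hc => hne (by rw [hc])
    have hd := hsepA a ha b hb hab
    rcases hside with hs | hs
    · have h1 := hs a ha; have h2 := hs b hb
      rw [show |θ - a| = a - θ by rw [abs_of_nonpos (by linarith)]; ring,
        show |θ - b| = b - θ by rw [abs_of_nonpos (by linarith)]; ring,
        show a - θ - (b - θ) = a - b by ring]
      exact hd
    · have h1 := hs a ha; have h2 := hs b hb
      rw [show |θ - a| = θ - a from abs_of_nonneg (by linarith),
        show |θ - b| = θ - b from abs_of_nonneg (by linarith),
        show θ - a - (θ - b) = -(a - b) by ring, abs_neg]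
      exact hd
  rw [← hsum, Finset.sum_add_distrib]
  have h1 := bucket_sum δ hδ B hBmem hBsep
  have h2 := bucket_sum' δ hδ B hBmem hBsep
  linarith

/-- Córdoba's estimate, dual form: for `δ × 1` rectangles `R_θ` in `δ`-separated
directions, all contained in a fixed ball of radius `O(1)`, one has
`Σ_{θ,θ'} |R_θ ∩ R_{θ'}| ≤ C log(1/δ)`. -/
theorem cordoba_rectangles :
    ∃ C : ℝ, 0 < C ∧ ∀ (δ : ℝ) (Ω : Finset ℝ) (R : ℝ → Set (ℝ × ℝ)),
      0 < δ → δ < 1/2 →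
      (∀ θ ∈ Ω, θ ∈ Set.Ico (0:ℝ) π) →
      (∀ θ ∈ Ω, ∀ θ' ∈ Ω, θ ≠ θ' → δ ≤ |θ - θ'|) →
      (∀ θ ∈ Ω, ∃ c : ℝ × ℝ, R θ = rect c (Real.cos θ, Real.sin θ) δ ∧
        R θ ⊆ Metric.ball 0 2) →
      ∑ θ ∈ Ω, ∑ θ' ∈ Ω, (volume (R θ ∩ R θ')).toReal ≤ C * Real.log (1/δ) := by
  refine ⟨300, by norm_num, ?_⟩
  intro δ Ω R hδ0 hδhalf hrange hsep hrect
  choose cc hcc _hball using hrect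
  set K := ⌊π / δ⌋₊ with hK
  set L := Real.log (1/δ) with hL
  have hπ0 := Real.pi_pos
  have hπ3 := Real.pi_gt_three
  have hπ4 := Real.pi_le_four
  have hK1 : 1 ≤ K := Nat.le_floor (by
    rw [Nat.cast_one, le_div_iff₀ hδ0]; linarith)
  have hKle : (K:ℝ) ≤ π / δ := Nat.floor_le (by positivity)
  have hKpos : (0:ℝ) < K := by exact_mod_cast hK1
  have hlogK : Real.log K ≤ Real.log π + L := by
    have ha : Real.log K ≤ Real.log (π/δ) := Real.log_le_log hKpos hKle
    have hb : Real.log (π/δ) = Real.log π + L := by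
      rw [hL, one_div, Real.log_inv, Real.log_div (ne_of_gt hπ0) (ne_of_gt hδ0)]
      ring
    linarith
  have hlogπ : Real.log π ≤ 3 := le_trans (Real.log_le_sub_one_of_pos hπ0) (by linarith)
  have hL2 : (0.693:ℝ) ≤ L := by
    have hd9 := Real.log_two_gt_d9
    have h2 : (2:ℝ) ≤ 1/δ := by rw [le_div_iff₀ hδ0]; linarith
    have := Real.log_le_log two_pos h2
    rw [hL]; linarith
  have hlogK0 : 0 ≤ Real.log K := Real.log_nonneg (by exact_mod_cast hK1)
  have hcard : (Ω.card : ℝ) * δ ≤ π + δ := by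
    have hc := card_sep δ hδ0 Ω hrange hsep
    have hc' : (Ω.card:ℝ) ≤ (K:ℝ) + 1 := by exact_mod_cast hc
    have hKδ : (K:ℝ) * δ ≤ π := by
      calc (K:ℝ) * δ ≤ (π/δ) * δ := by nlinarith
        _ = π := by field_simp
    nlinarith
  have key : ∀ θ ∈ Ω, ∑ θ' ∈ Ω, (volume (R θ ∩ R θ')).toReal
      ≤ 3*δ + 8*δ*(1 + Real.log K) := by
    intro θ hθ
    rw [← Finset.add_sum_erase Ω _ hθ]
    have hdiag : (volume (R θ ∩ R θ)).toReal ≤ δ := by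
      rw [hcc θ hθ]
      exact vol_inter_le_delta θ θ (cc θ hθ) (cc θ hθ) δ hδ0.le
    have hstep : ∑ θ' ∈ Ω.erase θ, (volume (R θ ∩ R θ')).toReal
        ≤ ∑ θ' ∈ Ω.erase θ, (min δ (2*δ^2/|θ - θ'|) + min δ (2*δ^2/(π - |θ - θ'|))) := by
      apply Finset.sum_le_sum
      intro θ' hθ'
      have hθ'Ω := Finset.mem_of_mem_erase hθ'
      have hne : θ ≠ θ' := (Finset.ne_of_mem_erase hθ').symm
      rw [hcc θ hθ, hcc θ' hθ'Ω]
      exact pair_bound θ θ' _ _ δ hδ0 (hrange θ hθ) (hrange θ' hθ'Ω) hne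
    have habsA : ∀ θ' ∈ Ω.erase θ, δ ≤ |θ - θ'| ∧ |θ - θ'| < π := by
      intro θ' hθ'
      have hθ'Ω := Finset.mem_of_mem_erase hθ'
      have hne : θ ≠ θ' := (Finset.ne_of_mem_erase hθ').symm
      refine ⟨hsep θ hθ θ' hθ'Ω hne, ?_⟩
      obtain ⟨h1, h2⟩ := hrange θ hθ
      obtain ⟨h3, h4⟩ := hrange θ' hθ'Ω
      rw [abs_sub_lt_iff]; constructor <;> linarith
    have hsepE : ∀ x ∈ Ω.erase θ, ∀ y ∈ Ω.erase θ, x ≠ y → δ ≤ |x - y| := fun x hx y hy =>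
      hsep x (Finset.mem_of_mem_erase hx) y (Finset.mem_of_mem_erase hy)
    have hsplit : ∑ θ' ∈ Ω.erase θ, (min δ (2*δ^2/|θ - θ'|) + min δ (2*δ^2/(π - |θ - θ'|)))
        = ∑ θ' ∈ (Ω.erase θ).filter (fun θ' => θ < θ'),
            (min δ (2*δ^2/|θ - θ'|) + min δ (2*δ^2/(π - |θ - θ'|)))
          + ∑ θ' ∈ (Ω.erase θ).filter (fun θ' => ¬ θ < θ'),
            (min δ (2*δ^2/|θ - θ'|) + min δ (2*δ^2/(π - |θ - θ'|))) :=
      (Finset.sum_filter_add_sum_filter_not _ _ _).symm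
    have hA1 := side_bound δ θ hδ0 ((Ω.erase θ).filter (fun θ' => θ < θ'))
      (fun θ' hθ' => habsA θ' (Finset.mem_of_mem_filter θ' hθ'))
      (fun x hx y hy => hsepE x (Finset.mem_of_mem_filter x hx) y (Finset.mem_of_mem_filter y hy))
      (Or.inl (fun θ' hθ' => (Finset.mem_filter.mp hθ').2))
    have hA2 := side_bound δ θ hδ0 ((Ω.erase θ).filter (fun θ' => ¬ θ < θ'))
      (fun θ' hθ' => habsA θ' (Finset.mem_of_mem_filter θ' hθ'))
      (fun x hx y hy => hsepE x (Finset.mem_of_mem_filter x hx) y (Finset.mem_of_mem_filter y hy))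
      (Or.inr (fun θ' hθ' => by
        have h1 := (Finset.mem_filter.mp hθ').2
        have h2 : θ' ≠ θ := Finset.ne_of_mem_erase (Finset.mem_of_mem_filter θ' hθ')
        rcases lt_or_eq_of_le (not_lt.mp h1) with h | h
        · exact h
        · exact absurd h h2))
    rw [hsplit] at hstep
    linarith
  calc ∑ θ ∈ Ω, ∑ θ' ∈ Ω, (volume (R θ ∩ R θ')).toReal
      ≤ Ω.card • (3*δ + 8*δ*(1 + Real.log K)) := Finset.sum_le_card_nsmul _ _ _ key
    _ = (Ω.card : ℝ) * (3*δ + 8*δ*(1 + Real.log K)) := by rw [nsmul_eq_mul]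
    _ = ((Ω.card : ℝ) * δ) * (3 + 8*(1 + Real.log K)) := by ring
    _ ≤ (π + δ) * (3 + 8*(1 + Real.log K)) :=
        mul_le_mul_of_nonneg_right hcard (by linarith)
    _ ≤ 4.5 * (35 + 8 * L) := by
        have hπδ : π + δ ≤ 4.5 := by linarith
        have hin : 3 + 8*(1 + Real.log K) ≤ 35 + 8 * L := by linarith
        apply mul_le_mul hπδ hin (by linarith) (by norm_num)
    _ ≤ 300 * L := by nlinarith
end
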